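/- (Blocks Lemma) Let G be a group and let g = (b_1,…,b_u) ∈ G^r be a concatenation of nonempty blocks b_i ∈ G^{r_i} such that the product of the entries of b_i equals 1 for every index i except possibly one index i_0. Then: (a) for every permutation π of {1,…,u}, the tuple g is braid equivalent to (b_{π(1)},…,b_{π(u)}); and (b) for every i, every τ in the subgroup generated by the entries of b_i, and every index j different from i_0, the tuple g is braid equivalent to the tuple obtained from g by conjugating every entry of the block b_j by τ and leaving all other blocks unchanged. -/

import Mathlib

/-- Elementary braid move: replace adjacent entries `(a, b)` by `(a * b * a⁻¹, a)`. -/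
def BraidMove {G : Type*} [Group G] (x y : List G) : Prop :=
  ∃ (l₁ l₂ : List G) (a b : G),
    x = l₁ ++ a :: b :: l₂ ∧ y = l₁ ++ (a * b * a⁻¹) :: a :: l₂

/-- Braid equivalence: the equivalence relation generated by elementary braid moves. -/
def BraidEquiv {G : Type*} [Group G] : List G → List G → Prop :=
  Relation.EqvGen BraidMove

/-!
Moving a block `l` across a block `m` by braid moves conjugates `m` by the product of `l`, so a
block of product one commutes with its neighbours; part (a) follows by realising the permutation
through adjacent swaps, in each of which at least one of the two blocks has product one.

For part (b), the elements `τ` by which every product-one tail following a tuple `c` can be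
conjugated form a subgroup. It contains `c.prod` (move `c` across the tail and back) and only grows
when `c` is extended on either side, so it contains every entry of `c`. The block `b_j` has
product one, so it can be moved to the end of the tuple, conjugated there by any element of this
subgroup for the remaining blocks (which contain `b_i`), and moved back. When `i = j`,
a cyclic rotation brings any entry `x` of `b_j` to the front, and the full twist of the remaining
entries then conjugates the whole block by `x`.
-/
section

open MulAut (conj)

variable {G : Type*} [Group G]

theorem List.map_conj_map_conj (a b : G) (l : List G) :
    (l.map (conj b)).map (conj a) = l.map (conj (a * b)) := by
  simp [List.map_map, Function.comp_def]

theorem List.prod_map_conj (g : G) (l : List G) : (l.map (conj g)).prod = g * l.prod * g⁻¹ := by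
  simp [← map_list_prod]

theorem List.prod_map_conj_eq_one (g : G) {l : List G} (hl : l.prod = 1) :
    (l.map (conj g)).prod = 1 := by
  simp [List.prod_map_conj, hl]

theorem BraidMove.prod_eq {x y : List G} (h : BraidMove x y) : x.prod = y.prod := by
  obtain ⟨l₁, l₂, a, b, rfl, rfl⟩ := h
  simp [mul_assoc]

namespace BraidEquiv

protected theorem refl (x : List G) : BraidEquiv x x := Relation.EqvGen.refl x

protected theorem symm {x y : List G} (h : BraidEquiv x y) : BraidEquiv y x :=
  Relation.EqvGen.symm x y h

protected theorem trans {x y z : List G} (h₁ : BraidEquiv x y) (h₂ : BraidEquiv y z) :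
    BraidEquiv x z :=
  Relation.EqvGen.trans x y z h₁ h₂

theorem of_braidMove {x y : List G} (h : BraidMove x y) : BraidEquiv x y :=
  Relation.EqvGen.rel x y h

theorem prod_eq {x y : List G} (h : BraidEquiv x y) : x.prod = y.prod := by
  induction h with
  | rel x y h => exact h.prod_eq
  | refl => rfl
  | symm _ _ _ ih => exact ih.symm
  | trans _ _ _ _ _ ih₁ ih₂ => exact ih₁.trans ih₂

theorem lift (f : List G → List G) (hf : ∀ x y, BraidMove x y → BraidMove (f x) (f y))
    {x y : List G} (h : BraidEquiv x y) : BraidEquiv (f x) (f y) := by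
  induction h with
  | rel x y h => exact of_braidMove (hf x y h)
  | refl => exact .refl _
  | symm _ _ _ ih => exact ih.symm
  | trans _ _ _ _ _ ih₁ ih₂ => exact ih₁.trans ih₂

theorem append_left (l : List G) {x y : List G} (h : BraidEquiv x y) :
    BraidEquiv (l ++ x) (l ++ y) :=
  h.lift (l ++ ·) fun _ _ ⟨l₁, l₂, a, b, hx, hy⟩ =>
    ⟨l ++ l₁, l₂, a, b, by simp [hx], by simp [hy]⟩

theorem append_right (l : List G) {x y : List G} (h : BraidEquiv x y) :
    BraidEquiv (x ++ l) (y ++ l) :=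
  h.lift (· ++ l) fun _ _ ⟨l₁, l₂, a, b, hx, hy⟩ =>
    ⟨l₁, l₂ ++ l, a, b, by simp [hx], by simp [hy]⟩

theorem map_conj (g : G) {x y : List G} (h : BraidEquiv x y) :
    BraidEquiv (x.map (conj g)) (y.map (conj g)) :=
  h.lift (List.map (conj g)) fun _ _ ⟨l₁, l₂, a, b, hx, hy⟩ =>
    ⟨l₁.map (conj g), l₂.map (conj g), conj g a, conj g b, by simp [hx], by simp [hy, mul_assoc]⟩
theorem cons_swap (a : G) (l : List G) : BraidEquiv (a :: l) (l.map (conj a) ++ [a]) := by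
  induction l with
  | nil => exact .refl [a]
  | cons b l ih =>
    exact (of_braidMove ⟨[], l, a, b, rfl, rfl⟩).trans (ih.append_left [conj a b])

theorem append_swap (l m : List G) : BraidEquiv (l ++ m) (m.map (conj l.prod) ++ l) := by
  induction l with
  | nil => simpa using .refl m
  | cons a l ih =>
    have := (cons_swap a (m.map (conj l.prod))).append_right l
    simpa [List.map_conj_map_conj] using (ih.append_left [a]).trans this

-- The full twist acts on a tuple by conjugation by its product.
theorem map_conj_prod (l : List G) : BraidEquiv l (l.map (conj l.prod)) := by
  induction l with
  | nil => exact .refl []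
  | cons a l ih =>
    have twist := append_swap (l.map (conj a)) [a]
    have hhead : conj (l.map (conj a)).prod a = conj (a * l.prod) a := by
      simp [List.prod_map_conj, mul_assoc]
    have := (cons_swap a l).trans (twist.trans ((ih.map_conj a).append_left _))
    simpa [hhead, List.map_conj_map_conj] using this

theorem append_comm {l : List G} (hl : l.prod = 1) (m : List G) :
    BraidEquiv (l ++ m) (m ++ l) := by
  simpa [hl] using append_swap l m

theorem append_comm_of_prod_append_eq_one {l m : List G} (h : (l ++ m).prod = 1) :
    BraidEquiv (l ++ m) (m ++ l) := by
  have hl : l.prod = m.prod⁻¹ := eq_inv_of_mul_eq_one_left (by simpa using h)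
  have untwist : BraidEquiv (m.map (conj m.prod⁻¹)) m := by
    simpa [List.map_conj_map_conj] using (map_conj_prod m).map_conj m.prod⁻¹
  exact (hl ▸ append_swap l m).trans (untwist.append_right l)

theorem cons_map_conj_self {a : G} {l : List G} (h : (a :: l).prod = 1) :
    BraidEquiv (a :: l) ((a :: l).map (conj a)) := by
  have hl : (l.map (conj a)).prod = a⁻¹ := by
    have : l.prod = a⁻¹ := eq_inv_of_mul_eq_one_right (by simpa using h)
    rw [List.prod_map_conj, this]; group
  have := (map_conj_prod (l.map (conj a))).symm.append_left [a]
  simpa [hl, List.map_conj_map_conj] using this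

theorem append_append_comm {A m : List G} (hm : m.prod = 1) (C : List G) :
    BraidEquiv (A ++ m ++ C) (A ++ C ++ m) := by
  simpa using (append_comm hm C).append_left A

theorem flatten_of_perm {K K' : List (List G)} (h : K.Perm K')
    (hK : K.Pairwise fun l m => l.prod = 1 ∨ m.prod = 1) : BraidEquiv K.flatten K'.flatten := by
  induction h with
  | nil => exact .refl []
  | cons l _ ih => simpa using (ih (List.pairwise_cons.1 hK).2).append_left l
  | swap l m K =>
    have hswap : BraidEquiv (m ++ l) (l ++ m) := by
      rcases (List.pairwise_cons.1 hK).1 l List.mem_cons_self with hm | hl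
      · exact append_comm hm l
      · exact (append_comm hl m).symm
    simpa using hswap.append_right K.flatten
  | trans h₁ _ ih₁ ih₂ => exact (ih₁ hK).trans (ih₂ ((h₁.pairwise_iff Or.symm).1 hK))

def conjugators (d : List G) : Subgroup G where
  carrier := {τ | BraidEquiv d (d.map (conj τ))}
  one_mem' := by simpa using .refl d
  mul_mem' {a b} ha hb := by simpa [List.map_conj_map_conj] using ha.trans (hb.map_conj a)
  inv_mem' {a} ha := by simpa [List.map_conj_map_conj] using (ha.map_conj a⁻¹).symm

theorem conjugators_le {d d' : List G} (h : BraidEquiv d d') : conjugators d' ≤ conjugators d :=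
  fun τ hτ => h.trans (hτ.trans (h.symm.map_conj τ))

theorem mem_conjugators {d : List G} (hd : d.prod = 1) {x : G} (hx : x ∈ d) :
    x ∈ conjugators d := by
  obtain ⟨l, r, rfl⟩ := List.append_of_mem hx
  have hrot := append_comm_of_prod_append_eq_one hd
  exact conjugators_le hrot (cons_map_conj_self (hrot.prod_eq ▸ hd))

theorem closure_le_conjugators {d : List G} (hd : d.prod = 1) :
    Subgroup.closure {x | x ∈ d} ≤ conjugators d :=
  (Subgroup.closure_le _).2 fun _ => mem_conjugators hd

def tailConjugators (c : List G) : Subgroup G where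
  carrier := {τ | ∀ m : List G, m.prod = 1 → BraidEquiv (c ++ m) (c ++ m.map (conj τ))}
  one_mem' m _ := by simpa using .refl (c ++ m)
  mul_mem' {a b} ha hb m hm := by
    simpa [List.map_conj_map_conj] using
      (hb m hm).trans (ha (m.map (conj b)) (List.prod_map_conj_eq_one _ hm))
  inv_mem' {a} ha m hm := by
    simpa [List.map_conj_map_conj] using
      (ha (m.map (conj a⁻¹)) (List.prod_map_conj_eq_one _ hm)).symm

theorem prod_mem_tailConjugators (c : List G) : c.prod ∈ tailConjugators c := fun m hm =>
  (append_swap c m).trans (append_comm (List.prod_map_conj_eq_one _ hm) c)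

-- Moving `c` across `B` conjugates `B` but brings `c` next to the tail.
theorem tailConjugators_mono {c c' : List G} (h : c <:+: c') :
    tailConjugators c ≤ tailConjugators c' := by
  obtain ⟨A, B, rfl⟩ := h
  intro τ hτ m hm
  have hB := append_swap c B
  have h₁ : BraidEquiv (c ++ B ++ m) (B.map (conj c.prod) ++ (c ++ m)) := by
    simpa using hB.append_right m
  have h₂ : BraidEquiv (B.map (conj c.prod) ++ (c ++ m.map (conj τ)))
      (c ++ B ++ m.map (conj τ)) := by
    simpa using hB.symm.append_right (m.map (conj τ))
  simpa using (h₁.trans (((hτ m hm).append_left _).trans h₂)).append_left A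

theorem closure_le_tailConjugators (c : List G) :
    Subgroup.closure {x | x ∈ c} ≤ tailConjugators c :=
  (Subgroup.closure_le _).2 fun x hx => by
    simpa using
      tailConjugators_mono ((List.singleton_infix_iff _ _).2 hx) (prod_mem_tailConjugators [x])

theorem append_append_map_conj {A m C : List G} (hm : m.prod = 1) {τ : G}
    (hτ : τ ∈ tailConjugators (A ++ C)) :
    BraidEquiv (A ++ m ++ C) (A ++ m.map (conj τ) ++ C) :=
  (append_append_comm hm C).trans <| (hτ m hm).trans <|
    (append_append_comm (List.prod_map_conj_eq_one _ hm) C).symm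

end BraidEquiv

end

theorem List.exists_ofFn_update_eq {α : Type*} {u : ℕ} (f : Fin u → α) (j : Fin u) :
    ∃ A C : List α, (∀ v, List.ofFn (Function.update f j v) = A ++ v :: C) ∧
      ∀ i ≠ j, f i ∈ A ++ C := by
  obtain ⟨P, R, hPR⟩ := List.append_of_mem (List.mem_finRange j)
  have hj : j ∉ P ++ R :=
    (List.nodup_cons.1 (List.nodup_middle.1 (hPR ▸ List.nodup_finRange u))).1
  refine ⟨P.map f, R.map f, fun v => ?_, fun i hi => ?_⟩
  · rw [List.ofFn_eq_map, hPR]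
    simp only [List.map_append, List.map_cons, Function.update_self]
    congr 1
    · exact List.map_congr_left fun k hk => Function.update_of_ne (by grind) _ _
    · exact congrArg _ (List.map_congr_left fun k hk => Function.update_of_ne (by grind) _ _)
  · have : i ∈ P ++ j :: R := hPR ▸ List.mem_finRange i
    simp only [List.mem_append, List.mem_cons, List.mem_map] at this ⊢
    grind

theorem blocks_lemma_general {G : Type*} [Group G] {u : ℕ} (bs : Fin u → List G)
    (i₀ : Fin u)
    (hprod : ∀ i, i ≠ i₀ → (bs i).prod = 1) :
    (∀ π : Equiv.Perm (Fin u),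
      BraidEquiv (List.ofFn bs).flatten (List.ofFn (fun i => bs (π i))).flatten) ∧
    (∀ (i j : Fin u) (τ : G), τ ∈ Subgroup.closure {x | x ∈ bs i} → j ≠ i₀ →
      BraidEquiv (List.ofFn bs).flatten
        (List.ofFn (Function.update bs j ((bs j).map (fun x => τ * x * τ⁻¹)))).flatten) := by
  refine ⟨fun π => ?_, fun i j τ hτ hj => ?_⟩
  · have hpair : (List.ofFn bs).Pairwise fun l m => l.prod = 1 ∨ m.prod = 1 :=
      List.pairwise_ofFn.2 fun i k hik => (eq_or_ne i i₀).elim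
        (fun hi => Or.inr (hprod k (hi ▸ hik.ne'))) (fun hi => Or.inl (hprod i hi))
    exact BraidEquiv.flatten_of_perm (π.ofFn_comp_perm bs).symm hpair
  obtain ⟨A, C, hupdate, hmem⟩ := List.exists_ofFn_update_eq bs j
  have hsplit : List.ofFn bs = A ++ bs j :: C := by simpa using hupdate (bs j)
  rw [hsplit, hupdate]
  simp only [List.flatten_append, List.flatten_cons, ← List.append_assoc]
  change BraidEquiv (A.flatten ++ bs j ++ C.flatten)
    (A.flatten ++ (bs j).map (MulAut.conj τ) ++ C.flatten)
  rcases eq_or_ne i j with rfl | hij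
  · exact ((BraidEquiv.closure_le_conjugators (hprod i hj) hτ).append_left _).append_right _
  · have hτ' : τ ∈ BraidEquiv.tailConjugators (A.flatten ++ C.flatten) := by
      refine BraidEquiv.tailConjugators_mono ?_ (BraidEquiv.closure_le_tailConjugators _ hτ)
      simpa using List.infix_of_mem_flatten (hmem i hij)
    exact BraidEquiv.append_append_map_conj (hprod j hj) hτ'

/-- **Blocks Lemma.** Let `g` be a concatenation of nonempty blocks `bs 0, …, bs (u-1)`,
each with product 1 except possibly the block `i₀`. Then (a) `g` is braid equivalent to
the concatenation of the blocks in any permuted order, and (b) for any `i`, any `τ` in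
the subgroup generated by the entries of block `i`, and any `j ≠ i₀`, `g` is braid
equivalent to the tuple obtained by conjugating every entry of block `j` by `τ`. -/
theorem blocks_lemma {G : Type*} [Group G] {u : ℕ} (bs : Fin u → List G)
    (hne : ∀ i, bs i ≠ []) (i₀ : Fin u)
    (hprod : ∀ i, i ≠ i₀ → (bs i).prod = 1) :
    (∀ π : Equiv.Perm (Fin u),
      BraidEquiv (List.ofFn bs).flatten (List.ofFn (fun i => bs (π i))).flatten) ∧
    (∀ (i j : Fin u) (τ : G), τ ∈ Subgroup.closure {x | x ∈ bs i} → j ≠ i₀ →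
      BraidEquiv (List.ofFn bs).flatten
        (List.ofFn (Function.update bs j ((bs j).map (fun x => τ * x * τ⁻¹)))).flatten) :=
  blocks_lemma_general bs i₀ hprod
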